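/- Fix integers C and k with 1 ≤ k and k + 1 ≤ C. For all a, b ∈ ℝ, R_hard(F(a,b)) = C·binom(C−1, k)·(−R(a,b)), where R(a,b) = log(exp(2a + bk) / (exp(2a + bk) + k·exp(a + b(k+1)) + (C − k − 1)·exp((k+2)b))) and binom(C−1, k) is the binomial coefficient. -/
import Mathlib


open Real

/-- softmax of a vector `v ∈ ℝ^d`: `softmax v j = exp (v j) / ∑ m, exp (v m)`. -/
noncomputable def softmax {d : ℕ} (v : Fin d → ℝ) : Fin d → ℝ :=
  fun j => Real.exp (v j) / ∑ m, Real.exp (v m)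

/-- The hard OKO risk. -/
noncomputable def Rhard {C : ℕ} (k : ℕ) (F : Fin C → Fin C → ℝ) : ℝ :=
  -∑ i : Fin C,
    ∑ S ∈ Finset.univ.filter (fun S : Finset (Fin C) => S.card = k ∧ i ∉ S),
      Real.log (softmax (fun j => 2 * F i j + ∑ ℓ ∈ S, F ℓ j) i)

/-- `R(a,b) = log(exp(2a + bk) / (exp(2a + bk) + k·exp(a + b(k+1)) + (C−k−1)·exp((k+2)b)))`. -/
noncomputable def Rfun (k C : ℕ) (a b : ℝ) : ℝ :=
  Real.log (Real.exp (2 * a + b * k) /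
    (Real.exp (2 * a + b * k) + k * Real.exp (a + b * (k + 1))
      + ((C : ℝ) - k - 1) * Real.exp ((k + 2) * b)))

/-- On the symmetric family `F(a,b)` (diagonal entries `a`, off-diagonal entries `b`),
the hard OKO risk equals `C·binom(C−1,k)·(−R(a,b))`. -/
theorem Rhard_symmetric_eval {C k : ℕ} (hk : 1 ≤ k) (hkC : k + 1 ≤ C) (a b : ℝ) :
    Rhard k (fun i j : Fin C => if i = j then a else b)
      = (C : ℝ) * (Nat.choose (C - 1) k : ℝ) * (-(Rfun k C a b)) := by
  classical
  -- helper: inner sum of ite over a finset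
  have hsum_ite : ∀ (S : Finset (Fin C)) (m : Fin C),
      ∑ ℓ ∈ S, (if ℓ = m then a else b)
        = (S.card : ℝ) * b + (if m ∈ S then a - b else 0) := by
    intro S m
    have h : ∀ ℓ : Fin C, (if ℓ = m then a else b)
        = b + (if ℓ = m then a - b else 0) := by
      intro ℓ; split <;> ring
    simp_rw [h, Finset.sum_add_distrib, Finset.sum_const, Finset.sum_ite_eq',
      nsmul_eq_mul]
  -- main pointwise computation
  have key : ∀ (i : Fin C) (S : Finset (Fin C)), S.card = k → i ∉ S →
      Real.log (softmax (fun j => 2 * (if i = j then a else b)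
        + ∑ ℓ ∈ S, (if ℓ = j then a else b)) i) = Rfun k C a b := by
    intro i S hcard hiS
    set v : Fin C → ℝ := fun j => 2 * (if i = j then a else b)
        + ∑ ℓ ∈ S, (if ℓ = j then a else b) with hv
    have hvi : v i = 2 * a + b * k := by
      simp only [hv, hsum_ite, hcard, if_pos rfl, if_neg hiS, eq_self_iff_true, if_true, add_zero]
      ring
    have hvS : ∀ m ∈ S, v m = a + b * (k + 1) := by
      intro m hm
      have him : i ≠ m := fun h => hiS (h ▸ hm)
      simp only [hv, hsum_ite, hcard, if_neg him, if_pos hm]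
      ring
    have hSsub : S ⊆ Finset.univ.erase i := by
      intro x hx
      exact Finset.mem_erase.2 ⟨fun h => hiS (h ▸ hx), Finset.mem_univ x⟩
    have hvR : ∀ m ∈ (Finset.univ.erase i) \ S, v m = ((k : ℝ) + 2) * b := by
      intro m hm
      rcases Finset.mem_sdiff.1 hm with ⟨hme, hmS⟩
      have him : i ≠ m := fun h => (Finset.mem_erase.1 hme).1 h.symm
      simp only [hv, hsum_ite, hcard, if_neg him, if_neg hmS]
      ring
    have hcard_rest : (((Finset.univ.erase i) \ S).card : ℝ) = (C : ℝ) - k - 1 := by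
      have h1 : (Finset.univ.erase i : Finset (Fin C)).card = C - 1 := by
        simp [Finset.card_erase_of_mem]
      have h2 : ((Finset.univ.erase i) \ S).card = (C - 1) - k := by
        rw [Finset.card_sdiff_of_subset hSsub, h1, hcard]
      rw [h2]
      have hk1 : k ≤ C - 1 := Nat.le_sub_one_of_lt hkC
      have hC1 : 1 ≤ C := le_trans (Nat.le_add_left 1 k) hkC
      push_cast [Nat.cast_sub hk1, Nat.cast_sub hC1]
      ring
    -- denominator
    have hden : ∑ m, Real.exp (v m)
        = Real.exp (2 * a + b * k) + (k : ℝ) * Real.exp (a + b * (k + 1))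
          + ((C : ℝ) - k - 1) * Real.exp (((k : ℝ) + 2) * b) := by
      have h1 : ∑ m, Real.exp (v m)
          = Real.exp (v i) + ∑ m ∈ Finset.univ.erase i, Real.exp (v m) := by
        rw [← Finset.add_sum_erase _ _ (Finset.mem_univ i)]
      have h2 : ∑ m ∈ Finset.univ.erase i, Real.exp (v m)
          = ∑ m ∈ (Finset.univ.erase i) \ S, Real.exp (v m)
            + ∑ m ∈ S, Real.exp (v m) := by
        rw [Finset.sum_sdiff hSsub]
      have h3 : ∑ m ∈ S, Real.exp (v m) = (k : ℝ) * Real.exp (a + b * (k + 1)) := by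
        rw [Finset.sum_congr rfl fun m hm => by rw [hvS m hm]]
        rw [Finset.sum_const, hcard, nsmul_eq_mul]
      have h4 : ∑ m ∈ (Finset.univ.erase i) \ S, Real.exp (v m)
          = ((C : ℝ) - k - 1) * Real.exp (((k : ℝ) + 2) * b) := by
        rw [Finset.sum_congr rfl fun m hm => by rw [hvR m hm]]
        rw [Finset.sum_const, nsmul_eq_mul, hcard_rest]
      rw [h1, h2, h3, h4, hvi]; ring
    show Real.log (Real.exp (v i) / ∑ m, Real.exp (v m)) = _
    rw [hvi, hden, Rfun]
  -- count of subsets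
  have hcount : ∀ i : Fin C,
      (Finset.univ.filter (fun S : Finset (Fin C) => S.card = k ∧ i ∉ S)).card
        = Nat.choose (C - 1) k := by
    intro i
    have : Finset.univ.filter (fun S : Finset (Fin C) => S.card = k ∧ i ∉ S)
        = Finset.powersetCard k (Finset.univ.erase i) := by
      ext S
      simp [Finset.mem_powersetCard, Finset.subset_erase, and_comm]
    rw [this, Finset.card_powersetCard]
    congr 1
    simp [Finset.card_erase_of_mem]
  unfold Rhard
  have hinner : ∀ i : Fin C,
      ∑ S ∈ Finset.univ.filter (fun S : Finset (Fin C) => S.card = k ∧ i ∉ S),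
        Real.log (softmax (fun j => 2 * (if i = j then a else b)
          + ∑ ℓ ∈ S, (if ℓ = j then a else b)) i)
        = (Nat.choose (C - 1) k : ℝ) * Rfun k C a b := by
    intro i
    rw [Finset.sum_congr rfl fun S hS => by
      rcases Finset.mem_filter.1 hS with ⟨-, h1, h2⟩
      exact key i S h1 h2]
    rw [Finset.sum_const, hcount i, nsmul_eq_mul]
  simp_rw [hinner]
  rw [Finset.sum_const, Finset.card_univ, Fintype.card_fin, nsmul_eq_mul]
  ring
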